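/- Let K be a Markov kernel on a countable set G satisfying condition (*): there exist l ∈ ℕ and ε > 0 such that ‖K^l(x,·) ∧ K^{l+1}(x,·)‖ > ε for every x ∈ G. Then for every tail path property A ⊆ G^ℕ there exists an invariant path property A' ⊆ G^ℕ such that ℙ_x(A Δ A') = 0 simultaneously for every x ∈ G; consequently the Markov chain with kernel K and any initial distribution is steady. In particular, if K additionally has the Liouville property, then for every tail path property A and every x ∈ G one has ℙ_x(A) ∈ {0,1}. -/

import Mathlib

open MeasureTheory ENNReal

namespace CMTPaper

variable {G : Type*}

/-- The `n`-step kernel of a Markov kernel `K` on a countable set `G`: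
`K^0(x,·) = δ_x` and `K^{n+1}(x,A) = Σ_y K(x,{y})·K^n(y,A)`. -/
noncomputable def nStep [MeasurableSpace G] (K : G → Measure G) : ℕ → G → Measure G
  | 0 => fun x => Measure.dirac x
  | n + 1 => fun x => Measure.sum fun y => K x {y} • nStep K n y

/-- A kernel is cycle-free if `K^m(x,{x}) = 0` for every `x` and every `m ≥ 1`. -/
def CycleFree [MeasurableSpace G] (K : G → Measure G) : Prop :=
  ∀ x : G, ∀ m : ℕ, 1 ≤ m → nStep K m x {x} = 0

/-- `P` is the law on path space `G^ℕ` of the Markov chain with kernel `K` started at `x`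
(characterized by its finite-dimensional cylinder probabilities). -/
def IsPathLaw [MeasurableSpace G] (K : G → Measure G) (x : G) (P : Measure (ℕ → G)) : Prop :=
  ∀ (n : ℕ) (u : ℕ → G), u 0 = x →
    P {ω | ∀ i ≤ n, ω i = u i} = ∏ i ∈ Finset.range n, K (u i) {u (i + 1)}

/-- The set of collisions of two paths: pairs `(m,n)` with `m,n ≥ 1` and `ω m = ω' n`. -/
def collisions (ω ω' : ℕ → G) : Set (ℕ × ℕ) :=
  {p : ℕ × ℕ | 1 ≤ p.1 ∧ 1 ≤ p.2 ∧ ω p.1 = ω' p.2}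

/-- `μ` is the law on `G^G` of the coalescing Markov trajectories (CMT) with kernel `K`,
i.e. the product measure `⊗_x K(x,·)` (characterized on cylinders). -/
def IsCMTLaw [MeasurableSpace G] (K : G → Measure G) (μ : Measure (G → G)) : Prop :=
  ∀ (s : Finset G) (u : G → G), μ {f | ∀ x ∈ s, f x = u x} = ∏ x ∈ s, K x {u x}

/-- Adjacency in the graph of `f`: an edge between `x` and `f x` for every `x`. -/
def Adj (f : G → G) (a b : G) : Prop := f a = b ∨ f b = a

/-- `a` and `b` lie in the same connected component of the graph of `f`. -/
def SameComponent (f : G → G) (a b : G) : Prop := Relation.ReflTransGen (Adj f) a b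

/-- The connected component of `v` in the graph of `f`. -/
def component (f : G → G) (v : G) : Set G := {u | SameComponent f u v}

/-- The level set of `v`: points whose forward orbit merges with that of `v` after the same
number of steps. -/
def levelSet (f : G → G) (v : G) : Set G := {w | ∃ n : ℕ, f^[n] w = f^[n] v}

/-- The ancestor-line map `π (v, f) = (f^{(n)}(v))_{n ≥ 0}`. -/
def ancLine : G × (G → G) → ℕ → G := fun p n => p.2^[n] p.1

/-- Total-variation distance between two measures on a countable discrete space. -/
noncomputable def tvDist [MeasurableSpace G] (ν₁ ν₂ : Measure G) : ℝ≥0∞ :=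
  ∑' y : G, ((ν₁ {y} - ν₂ {y}) + (ν₂ {y} - ν₁ {y}))

/-- The mass `‖ν₁ ∧ ν₂‖ = Σ_y min(ν₁{y}, ν₂{y})` of the meet of two measures. -/
noncomputable def meetMass [MeasurableSpace G] (ν₁ ν₂ : Measure G) : ℝ≥0∞ :=
  ∑' y : G, min (ν₁ {y}) (ν₂ {y})

/-- The shift on path space, `σ (x_i)_{i≥0} = (x_{i+1})_{i≥0}`. -/
def shift : (ℕ → G) → ℕ → G := fun ω i => ω (i + 1)

/-- An invariant path property: a measurable shift-invariant subset of path space. -/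
def IsInvariantPathProperty [MeasurableSpace G] (A : Set (ℕ → G)) : Prop :=
  MeasurableSet A ∧ shift ⁻¹' A = A

/-- The tail σ-algebra `⋂_n σ((x_i)_{i ≥ n})` on path space. -/
def tailMS (G : Type*) [MeasurableSpace G] : MeasurableSpace (ℕ → G) :=
  ⨅ n : ℕ, MeasurableSpace.comap (fun ω : ℕ → G => fun i => ω (n + i)) inferInstance

/-- A tail path property: a set in the tail σ-algebra of path space. -/
def IsTailPathProperty [MeasurableSpace G] (A : Set (ℕ → G)) : Prop :=
  MeasurableSet[tailMS G] A

/-- A function `h` is `K`-harmonic if `h(x) = Σ_y K(x,{y}) h(y)` for every `x`. -/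
def IsKHarmonic [MeasurableSpace G] (K : G → Measure G) (h : G → ℝ) : Prop :=
  ∀ x : G, h x = ∑' y : G, (K x {y}).toReal * h y

/-- `K` has the Liouville property: every bounded `K`-harmonic function is constant. -/
def LiouvilleProperty [MeasurableSpace G] (K : G → Measure G) : Prop :=
  ∀ h : G → ℝ, (∃ C : ℝ, ∀ x, |h x| ≤ C) → IsKHarmonic K h → ∀ x y : G, h x = h y

/-!
Write a tail event as `A = σ⁻ⁿ Bₙ` for every `n`. By the Markov property
`𝔼ₓ[1_A | X₀, …, Xₙ] = P_{Xₙ}(Bₙ)`, so Lévy's upward theorem gives `P_{Xₙ}(Bₙ) → 1_A` almost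
surely, and likewise `P_{Xₙ}(σ⁻¹ Bₙ) → 1_{σ⁻¹ A}`. Since `Bₙ = σ⁻ˡ B_{l+n}`, the Markov property
also writes `P_z(Bₙ)` and `P_z(σ⁻¹ Bₙ)` as the integrals of `w ↦ P_w(B_{l+n}) ∈ [0, 1]` against
`K^l(z, ·)` and `K^{l+1}(z, ·)`, which by condition (*) differ by at most `1 - ε < 1`. Hence
`1_A = 1_{σ⁻¹ A}` almost surely for every starting point. The shift is quasi-measure-preserving
for `∑ₓ Pₓ`, so the a.e. invariant set `A` is a.e. equal to the invariant set `limsup σ⁻ⁿ A`.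
For an invariant `A'` the function `z ↦ P_z(A')` is bounded and harmonic; under the Liouville
property it is constant, and Lévy's theorem forces `1_{A'}` to equal that constant almost surely,
so the constant is `0` or `1`.
-/

open Filter Topology Preorder
open MeasureTheory.Filtration (piLE)

lemma shift_iterate_apply (n : ℕ) (ω : ℕ → G) (i : ℕ) : shift^[n] ω i = ω (i + n) := by
  induction n generalizing ω with
  | zero => rfl
  | succ n ih =>
    rw [Function.iterate_succ_apply, ih, shift]
    congr 1

lemma shift_surjective : Function.Surjective (shift : (ℕ → G) → ℕ → G) :=
  fun ω => ⟨fun i => ω (i - 1), funext fun i => by simp [shift]⟩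

lemma measurable_shift [MeasurableSpace G] : Measurable (shift : (ℕ → G) → ℕ → G) :=
  measurable_pi_lambda _ fun i => measurable_pi_apply (i + 1)

def cyl (u : ℕ → G) (n : ℕ) : Set (ℕ → G) := {ω | ∀ i ≤ n, ω i = u i}

lemma cyl_eq_preimage_restrictLe (u : ℕ → G) (n : ℕ) :
    cyl u n = restrictLe (π := fun _ => G) n ⁻¹' {restrictLe (π := fun _ => G) n u} := by
  ext ω
  simp [cyl, funext_iff]

lemma cyl_eq_of_mem {u ω : ℕ → G} {n : ℕ} (h : ω ∈ cyl u n) : cyl u n = cyl ω n := by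
  ext ω'
  exact forall₂_congr fun i hi => by rw [h i hi]

lemma cyl_inter_cyl (ω : ℕ → G) (n m : ℕ) : cyl ω n ∩ cyl ω m = cyl ω (max n m) := by
  ext ω'
  simp [cyl, or_imp, forall_and]

lemma cyl_inter_preimage_shift_iterate (ω : ℕ → G) (n m : ℕ) :
    cyl ω n ∩ shift^[n] ⁻¹' cyl (shift^[n] ω) m = cyl ω (n + m) := by
  ext ω'
  simp only [cyl, Set.mem_inter_iff, Set.mem_preimage, Set.mem_ofPred_eq, shift_iterate_apply]
  constructor
  · rintro ⟨h₁, h₂⟩ i hi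
    rcases le_total i n with h | h
    · exact h₁ i h
    · obtain ⟨j, rfl⟩ := Nat.exists_eq_add_of_le h
      rw [add_comm]
      exact h₂ j (by omega)
  · intro h
    exact ⟨fun i hi => h i (by omega), fun j hj => h (j + n) (by omega)⟩

lemma preimage_restrictLe_singleton_eq_empty_or_cyl (n : ℕ) (v : Set.Iic n → G) :
    restrictLe (π := fun _ => G) n ⁻¹' {v} = ∅ ∨
      ∃ ω, restrictLe (π := fun _ => G) n ⁻¹' {v} = cyl ω n := by
  rcases (restrictLe (π := fun _ => G) n ⁻¹' {v}).eq_empty_or_nonempty with h | ⟨ω, rfl⟩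
  · exact .inl h
  · exact .inr ⟨ω, (cyl_eq_preimage_restrictLe ω n).symm⟩

lemma isPiSystem_cyl : IsPiSystem {s : Set (ℕ → G) | ∃ u m, s = cyl u m} := by
  rintro _ ⟨u, n, rfl⟩ _ ⟨v, m, rfl⟩ ⟨ω, hu, hv⟩
  rw [cyl_eq_of_mem hu, cyl_eq_of_mem hv, cyl_inter_cyl]
  exact ⟨ω, _, rfl⟩

lemma measurable_eval_piLE {ι : Type*} [Preorder ι] {X : ι → Type*}
    [∀ i, MeasurableSpace (X i)] (i : ι) : Measurable[piLE i] fun ω : ∀ i, X i => ω i :=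
  (measurable_pi_apply (⟨i, Set.mem_Iic.2 le_rfl⟩ : Set.Iic i)).comp
    (comap_measurable (restrictLe i))

lemma iSup_piLE {ι : Type*} [Preorder ι] {X : ι → Type*} [∀ i, MeasurableSpace (X i)] :
    ⨆ i, piLE (X := X) i = MeasurableSpace.pi :=
  le_antisymm (iSup_le piLE.le) <| iSup_le fun i =>
    (measurable_eval_piLE i).comap_le.trans (le_iSup (fun i => (piLE i : MeasurableSpace _)) i)

section Measurability

variable [MeasurableSpace G]

lemma measurableSet_cyl [MeasurableSingletonClass G] (u : ℕ → G) (n : ℕ) :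
    MeasurableSet[piLE n] (cyl u n) := by
  rw [cyl_eq_preimage_restrictLe]
  exact ⟨_, measurableSet_singleton _, rfl⟩

lemma piLE_le_generateFrom_cyl [Countable G] (n : ℕ) :
    piLE n ≤ MeasurableSpace.generateFrom {s : Set (ℕ → G) | ∃ u m, s = cyl u m} := by
  rintro _ ⟨S, -, rfl⟩
  rw [← Set.biUnion_preimage_singleton]
  refine MeasurableSet.biUnion (m := MeasurableSpace.generateFrom _) S.to_countable fun v _ => ?_
  rcases preimage_restrictLe_singleton_eq_empty_or_cyl n v with h | ⟨ω, h⟩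
  · exact h ▸ MeasurableSpace.measurableSet_empty _
  · exact MeasurableSpace.measurableSet_generateFrom ⟨ω, n, h⟩

lemma pi_eq_generateFrom_cyl [Countable G] [MeasurableSingletonClass G] :
    (MeasurableSpace.pi : MeasurableSpace (ℕ → G)) =
      MeasurableSpace.generateFrom {s | ∃ u m, s = cyl u m} := by
  refine le_antisymm ?_ (MeasurableSpace.generateFrom_le ?_)
  · rw [← iSup_piLE]
    exact iSup_le piLE_le_generateFrom_cyl
  · rintro _ ⟨u, m, rfl⟩
    exact piLE.le m _ (measurableSet_cyl u m)

end Measurability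

lemma nStep_succ_apply [Countable G] [MeasurableSpace G] [MeasurableSingletonClass G]
    (K : G → Measure G) (n : ℕ) (x : G) (s : Set G) :
    nStep K (n + 1) x s = ∫⁻ y, nStep K n y s ∂K x := by
  rw [lintegral_countable', nStep, Measure.sum_apply_of_countable]
  exact tsum_congr fun y => mul_comm _ _

lemma tsum_measure_singleton [Countable G] [MeasurableSpace G] [MeasurableSingletonClass G]
    (ν : Measure G) : ∑' y, ν {y} = ν Set.univ := by
  simpa using (lintegral_countable' (μ := ν) fun _ => 1).symm

lemma lintegral_le_lintegral_add_one_sub_meetMass [Countable G] [MeasurableSpace G]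
    [MeasurableSingletonClass G] (ν₁ ν₂ : Measure G) [IsProbabilityMeasure ν₁] {f : G → ℝ≥0∞}
    (hf : ∀ y, f y ≤ 1) : ∫⁻ y, f y ∂ν₁ ≤ ∫⁻ y, f y ∂ν₂ + (1 - meetMass ν₁ ν₂) := by
  have hν₁ : ∑' y, ν₁ {y} = 1 := (tsum_measure_singleton ν₁).trans measure_univ
  set m : G → ℝ≥0∞ := fun y => min (ν₁ {y}) (ν₂ {y})
  have hm : m ≤ fun y => ν₁ {y} := fun y => min_le_left _ _
  have hmeet : ∑' y, m y ≠ ∞ :=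
    ne_top_of_le_ne_top (hν₁ ▸ one_ne_top) (ENNReal.tsum_le_tsum hm)
  have hrest : ∑' y, (ν₁ {y} - m y) = 1 - ∑' y, m y := by
    refine ENNReal.eq_sub_of_add_eq hmeet ?_
    rw [← ENNReal.tsum_add, ← hν₁]
    exact tsum_congr fun y => tsub_add_cancel_of_le (hm y)
  rw [lintegral_countable', lintegral_countable', meetMass, ← hrest, ← ENNReal.tsum_add]
  refine ENNReal.tsum_le_tsum fun y => ?_
  calc f y * ν₁ {y} = f y * m y + f y * (ν₁ {y} - m y) := by
        rw [← mul_add, add_tsub_cancel_of_le (hm y)]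
    _ ≤ f y * ν₂ {y} + 1 * (ν₁ {y} - m y) := by
        gcongr
        · exact min_le_right _ _
        · exact hf y
    _ = f y * ν₂ {y} + (ν₁ {y} - m y) := by rw [one_mul]

lemma meetMass_comm [MeasurableSpace G] (ν₁ ν₂ : Measure G) : meetMass ν₁ ν₂ = meetMass ν₂ ν₁ :=
  tsum_congr fun _ => min_comm _ _

lemma abs_toReal_sub_le_of_le_add {a b c : ℝ≥0∞} (ha : a ≠ ∞) (hb : b ≠ ∞) (hc : c ≠ ∞)
    (hab : a ≤ b + c) (hba : b ≤ a + c) : |a.toReal - b.toReal| ≤ c.toReal := by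
  rw [abs_sub_le_iff, sub_le_iff_le_add, sub_le_iff_le_add, add_comm c.toReal,
    add_comm c.toReal, ← ENNReal.toReal_add hb hc, ← ENNReal.toReal_add ha hc]
  exact ⟨ENNReal.toReal_mono (add_ne_top.2 ⟨hb, hc⟩) hab,
    ENNReal.toReal_mono (add_ne_top.2 ⟨ha, hc⟩) hba⟩

lemma abs_toReal_lintegral_sub_le [Countable G] [MeasurableSpace G]
    [MeasurableSingletonClass G] (ν₁ ν₂ : Measure G) [IsProbabilityMeasure ν₁]
    [IsProbabilityMeasure ν₂] {f : G → ℝ≥0∞} (hf : ∀ y, f y ≤ 1) :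
    |(∫⁻ y, f y ∂ν₁).toReal - (∫⁻ y, f y ∂ν₂).toReal| ≤ (1 - meetMass ν₁ ν₂).toReal := by
  have hfin : ∀ ν : Measure G, [IsProbabilityMeasure ν] → ∫⁻ y, f y ∂ν ≠ ∞ := fun ν _ =>
    ne_top_of_le_ne_top (by simp) (lintegral_mono hf)
  refine abs_toReal_sub_le_of_le_add (hfin ν₁) (hfin ν₂) (tsub_le_self.trans_lt one_lt_top).ne
    (lintegral_le_lintegral_add_one_sub_meetMass ν₁ ν₂ hf) ?_
  rw [meetMass_comm]
  exact lintegral_le_lintegral_add_one_sub_meetMass ν₂ ν₁ hf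

lemma IsTailPathProperty.exists_preimage_shift_iterate_eq [MeasurableSpace G]
    {A : Set (ℕ → G)} (hA : IsTailPathProperty A) (n : ℕ) :
    ∃ B, MeasurableSet B ∧ shift^[n] ⁻¹' B = A := by
  have hn := MeasurableSpace.measurableSet_iInf.1 hA n
  have hshift : (shift^[n] : (ℕ → G) → ℕ → G) = fun ω i => ω (n + i) := by
    ext ω i
    rw [shift_iterate_apply, add_comm]
  rw [← hshift] at hn
  exact MeasurableSpace.measurableSet_comap.1 hn

lemma IsTailPathProperty.measurableSet [MeasurableSpace G] {A : Set (ℕ → G)}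
    (hA : IsTailPathProperty A) : MeasurableSet A := by
  obtain ⟨B, hB, rfl⟩ := hA.exists_preimage_shift_iterate_eq 0
  exact hB

namespace IsPathLaw

variable [MeasurableSpace G] {K : G → Measure G} {x : G} {μ : Measure (ℕ → G)}

lemma measure_cyl (h : IsPathLaw K x μ) {u : ℕ → G} (n : ℕ) (hu : u 0 = x) :
    μ (cyl u n) = ∏ i ∈ Finset.range n, K (u i) {u (i + 1)} :=
  h n u hu

variable [MeasurableSingletonClass G]

lemma ae_eval_zero [IsProbabilityMeasure μ] (h : IsPathLaw K x μ) : ∀ᵐ ω ∂μ, ω 0 = x := by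
  have hcyl : cyl (fun _ => x) 0 = {ω : ℕ → G | ω 0 = x} := by
    ext ω
    simp [cyl]
  have h0 := h.measure_cyl 0 (u := fun _ => x) rfl
  rw [hcyl, Finset.prod_range_zero] at h0
  have hmeas : MeasurableSet {ω : ℕ → G | ω 0 = x} :=
    (measurableSet_singleton x).preimage (measurable_pi_apply 0)
  exact (ae_iff_measure_eq hmeas.nullMeasurableSet).2 (by rw [h0, measure_univ])

lemma measure_cyl_of_ne [IsProbabilityMeasure μ] (h : IsPathLaw K x μ) {u : ℕ → G} (n : ℕ)
    (hu : u 0 ≠ x) : μ (cyl u n) = 0 := by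
  rw [measure_eq_zero_iff_ae_notMem]
  filter_upwards [h.ae_eval_zero] with ω h0 hω
  exact hu ((hω 0 n.zero_le).symm.trans h0)

lemma measure_eval_one [IsProbabilityMeasure μ] (h : IsPathLaw K x μ) (y : G) :
    μ {ω | ω 1 = y} = K x {y} := by
  let u : ℕ → G := fun i => if i = 0 then x else y
  have hu : {ω : ℕ → G | ω 1 = y} =ᵐ[μ] cyl u 1 := by
    rw [Filter.eventuallyEq_set]
    filter_upwards [h.ae_eval_zero] with ω h0
    simp [cyl, Nat.le_one_iff_eq_zero_or_eq_one, or_imp, forall_and, u, h0]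
  rw [measure_congr hu, h.measure_cyl 1 (by simp [u])]
  simp [u]

end IsPathLaw

section PathLaws

variable [MeasurableSpace G] [MeasurableSingletonClass G] {K : G → Measure G}
  {P : G → Measure (ℕ → G)} [∀ x, IsProbabilityMeasure (P x)]

lemma measure_cyl_add (hP : ∀ x, IsPathLaw K x (P x)) (x : G) (ω : ℕ → G) (n m : ℕ) :
    P x (cyl ω (n + m)) = P x (cyl ω n) * P (ω n) (cyl (shift^[n] ω) m) := by
  by_cases hx : ω 0 = x
  · rw [(hP x).measure_cyl _ hx, (hP x).measure_cyl _ hx,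
      (hP _).measure_cyl _ (by rw [shift_iterate_apply, zero_add]), Finset.prod_range_add]
    simp only [shift_iterate_apply, add_comm, add_assoc]
  · rw [(hP x).measure_cyl_of_ne _ hx, (hP x).measure_cyl_of_ne _ hx, zero_mul]

lemma measure_cyl_inter_preimage_cyl (hP : ∀ x, IsPathLaw K x (P x)) (x : G) (u v : ℕ → G)
    (n m : ℕ) :
    P x (cyl u n ∩ shift^[n] ⁻¹' cyl v m) = P x (cyl u n) * P (u n) (cyl v m) := by
  by_cases hv : v 0 = u n
  · let ω : ℕ → G := fun i => if i ≤ n then u i else v (i - n)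
    have hωu : ω ∈ cyl u n := fun i hi => if_pos hi
    have hωv : shift^[n] ω ∈ cyl v m := fun j _ => by
      rcases j.eq_zero_or_pos with rfl | hj
      · simp [ω, shift_iterate_apply, hv]
      · simp [ω, shift_iterate_apply, hj.ne']
    rw [cyl_eq_of_mem hωu, cyl_eq_of_mem hωv, ← hωu n le_rfl, cyl_inter_preimage_shift_iterate,
      measure_cyl_add hP]
  · have hempty : cyl u n ∩ shift^[n] ⁻¹' cyl v m = ∅ := by
      refine Set.eq_empty_of_forall_notMem fun ω ⟨hu, hv'⟩ => hv ?_
      have := hv' 0 m.zero_le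
      rw [shift_iterate_apply, zero_add] at this
      rw [← this, hu n le_rfl]
    rw [hempty, measure_empty, (hP _).measure_cyl_of_ne _ hv, mul_zero]

variable [Countable G]

lemma measure_cyl_inter_preimage (hP : ∀ x, IsPathLaw K x (P x)) (x : G) (u : ℕ → G) (n : ℕ)
    {B : Set (ℕ → G)} (hB : MeasurableSet B) :
    P x (cyl u n ∩ shift^[n] ⁻¹' B) = P x (cyl u n) * P (u n) B := by
  have hshift : Measurable (shift^[n] : (ℕ → G) → ℕ → G) := measurable_shift.iterate n
  have key : ((P x).restrict (cyl u n)).map (shift^[n]) = P x (cyl u n) • P (u n) := by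
    refine ext_of_generate_finite _ pi_eq_generateFrom_cyl isPiSystem_cyl ?_ ?_
    · rintro _ ⟨v, m, rfl⟩
      have hcyl := piLE.le m _ (measurableSet_cyl v m)
      rw [Measure.map_apply hshift hcyl, Measure.restrict_apply (hcyl.preimage hshift),
        Set.inter_comm, measure_cyl_inter_preimage_cyl hP, Measure.smul_apply, smul_eq_mul]
    · simp [Measure.map_apply hshift .univ]
  rw [Set.inter_comm, ← Measure.restrict_apply (hB.preimage hshift), ← Measure.map_apply hshift hB,
    key, Measure.smul_apply, smul_eq_mul]

lemma measure_inter_preimage_shift_iterate (hP : ∀ x, IsPathLaw K x (P x)) (x : G) {n : ℕ}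
    {s : Set (ℕ → G)} (hs : MeasurableSet[piLE n] s) {B : Set (ℕ → G)}
    (hB : MeasurableSet B) :
    P x (s ∩ shift^[n] ⁻¹' B) = ∫⁻ ω in s, P (ω n) B ∂P x := by
  obtain ⟨S, -, rfl⟩ := hs
  -- `S` is countable, and each fibre of `restrictLe n` is empty or a cylinder.
  have hr : Measurable (restrictLe (π := fun _ => G) n) := measurable_restrictLe n
  suffices ((P x).restrict (shift^[n] ⁻¹' B)).map (restrictLe n) =
      ((P x).withDensity fun ω => P (ω n) B).map (restrictLe n) by
    have hS := congrArg (· S) this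
    simp only [Measure.map_apply hr (Set.to_countable S).measurableSet] at hS
    rwa [Measure.restrict_apply' (hB.preimage (measurable_shift.iterate n)),
      withDensity_apply' _] at hS
  refine Measure.ext_of_singleton fun v => ?_
  rw [Measure.map_apply hr (measurableSet_singleton v),
    Measure.map_apply hr (measurableSet_singleton v)]
  rcases preimage_restrictLe_singleton_eq_empty_or_cyl n v with h | ⟨ω, h⟩
  · simp [h]
  · have hcyl := piLE.le n _ (measurableSet_cyl ω n)
    rw [h, Measure.restrict_apply hcyl, measure_cyl_inter_preimage hP x ω n hB,
      withDensity_apply _ hcyl, setLIntegral_congr_fun hcyl fun ω' hω' => by rw [hω' n le_rfl],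
      setLIntegral_const, mul_comm]

lemma measure_preimage_shift_iterate_eq_lintegral_eval (hP : ∀ x, IsPathLaw K x (P x)) (x : G)
    (n : ℕ) {B : Set (ℕ → G)} (hB : MeasurableSet B) :
    P x (shift^[n] ⁻¹' B) = ∫⁻ z, P z B ∂(P x).map (· n) := by
  rw [lintegral_map (measurable_of_countable _) (measurable_pi_apply n),
    ← setLIntegral_univ, ← measure_inter_preimage_shift_iterate hP x .univ hB, Set.univ_inter]

lemma map_eval_one (hP : ∀ x, IsPathLaw K x (P x)) (x : G) : (P x).map (· 1) = K x :=
  Measure.ext_of_singleton fun y => by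
    rw [Measure.map_apply (measurable_pi_apply 1) (measurableSet_singleton y)]
    exact (hP x).measure_eval_one y

lemma measure_preimage_shift (hP : ∀ x, IsPathLaw K x (P x)) (x : G) {B : Set (ℕ → G)}
    (hB : MeasurableSet B) : P x (shift ⁻¹' B) = ∫⁻ y, P y B ∂K x := by
  rw [← map_eval_one hP, ← measure_preimage_shift_iterate_eq_lintegral_eval hP x 1 hB]
  rfl

lemma map_eval_eq_nStep (hP : ∀ x, IsPathLaw K x (P x)) (n : ℕ) (x : G) :
    (P x).map (· n) = nStep K n x := by
  induction n generalizing x with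
  | zero =>
    rw [Measure.map_congr (hP x).ae_eval_zero, Measure.map_const, measure_univ, one_smul]
    rfl
  | succ n ih =>
    refine Measure.ext_of_singleton fun z => ?_
    have hz : MeasurableSet {ω : ℕ → G | ω n = z} :=
      (measurableSet_singleton z).preimage (measurable_pi_apply n)
    have hpre : (fun ω : ℕ → G => ω (n + 1)) ⁻¹' {z} = shift ⁻¹' {ω | ω n = z} := rfl
    rw [Measure.map_apply (measurable_pi_apply _) (measurableSet_singleton z), hpre,
      measure_preimage_shift hP x hz, nStep_succ_apply]
    refine lintegral_congr fun y => ?_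
    rw [← ih, Measure.map_apply (measurable_pi_apply _) (measurableSet_singleton z)]
    rfl

lemma measure_preimage_shift_iterate (hP : ∀ x, IsPathLaw K x (P x)) (x : G) (n : ℕ)
    {B : Set (ℕ → G)} (hB : MeasurableSet B) :
    P x (shift^[n] ⁻¹' B) = ∫⁻ z, P z B ∂nStep K n x := by
  rw [measure_preimage_shift_iterate_eq_lintegral_eval hP x n hB, map_eval_eq_nStep hP]

lemma condExp_indicator_preimage_shift_iterate (hP : ∀ x, IsPathLaw K x (P x)) (x : G) (n : ℕ)
    {B : Set (ℕ → G)} (hB : MeasurableSet B) :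
    (fun ω => (P (ω n) B).toReal) =ᵐ[P x]
      (P x)[(shift^[n] ⁻¹' B).indicator 1 | piLE n] := by
  have hA : MeasurableSet (shift^[n] ⁻¹' B) := hB.preimage (measurable_shift.iterate n)
  have hmeas : Measurable[piLE n] fun ω : ℕ → G => (P (ω n) B).toReal :=
    (measurable_of_countable fun z => (P z B).toReal).comp (measurable_eval_piLE n)
  have hint : Integrable (fun ω : ℕ → G => (P (ω n) B).toReal) (P x) :=
    (integrable_const (1 : ℝ)).mono' (hmeas.mono (piLE.le n) le_rfl).aestronglyMeasurable
      (ae_of_all _ fun ω => by simp [abs_of_nonneg, ENNReal.toReal_le_of_le_ofReal, prob_le_one])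
  refine ae_eq_condExp_of_forall_setIntegral_eq (piLE.le n)
    ((integrable_const 1).indicator hA) (fun s _ _ => hint.integrableOn) (fun s hs _ => ?_)
    hmeas.stronglyMeasurable.aestronglyMeasurable
  have hdens : Measurable fun ω : ℕ → G => P (ω n) B :=
    (measurable_of_countable fun z => P z B).comp (measurable_pi_apply n)
  rw [integral_toReal hdens.aemeasurable (ae_of_all _ fun _ => measure_lt_top _ _),
    integral_indicator_one hA, measureReal_restrict_apply hA, Set.inter_comm, measureReal_def,
    measure_inter_preimage_shift_iterate hP x hs hB]

lemma ae_tendsto_measure_of_preimage_shift_iterate_eq (hP : ∀ x, IsPathLaw K x (P x)) (x : G)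
    {A : Set (ℕ → G)} {B : ℕ → Set (ℕ → G)} (hB : ∀ n, MeasurableSet (B n))
    (hAB : ∀ n, shift^[n] ⁻¹' B n = A) :
    ∀ᵐ ω ∂P x, Tendsto (fun n => (P (ω n) (B n)).toReal) atTop (𝓝 (A.indicator 1 ω)) := by
  have hA : MeasurableSet A := hAB 0 ▸ hB 0
  have hmeas : StronglyMeasurable[⨆ n, piLE n] (A.indicator (1 : (ℕ → G) → ℝ)) := by
    rw [iSup_piLE]
    exact stronglyMeasurable_one.indicator hA
  have hcond : ∀ᵐ ω ∂P x, ∀ n,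
      (P (ω n) (B n)).toReal = (P x)[A.indicator 1 | piLE n] ω :=
    ae_all_iff.2 fun n => hAB n ▸ condExp_indicator_preimage_shift_iterate hP x n (hB n)
  filter_upwards [((integrable_const 1).indicator hA).tendsto_ae_condExp hmeas, hcond]
    with ω hlim hω
  exact hlim.congr fun n => (hω n).symm

lemma measure_symmDiff_eq_zero_of_abs_sub_le (hP : ∀ x, IsPathLaw K x (P x)) (x : G)
    {A₁ A₂ : Set (ℕ → G)} {B₁ B₂ : ℕ → Set (ℕ → G)} (hB₁ : ∀ n, MeasurableSet (B₁ n))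
    (hB₂ : ∀ n, MeasurableSet (B₂ n)) (hAB₁ : ∀ n, shift^[n] ⁻¹' B₁ n = A₁)
    (hAB₂ : ∀ n, shift^[n] ⁻¹' B₂ n = A₂) {δ : ℝ} (hδ : δ < 1)
    (hle : ∀ n z, |(P z (B₁ n)).toReal - (P z (B₂ n)).toReal| ≤ δ) :
    P x (symmDiff A₁ A₂) = 0 := by
  rw [measure_eq_zero_iff_ae_notMem]
  filter_upwards [ae_tendsto_measure_of_preimage_shift_iterate_eq hP x hB₁ hAB₁,
    ae_tendsto_measure_of_preimage_shift_iterate_eq hP x hB₂ hAB₂] with ω h₁ h₂ hω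
  have hlim : |A₁.indicator 1 ω - A₂.indicator (1 : (ℕ → G) → ℝ) ω| ≤ δ :=
    le_of_tendsto (h₁.sub h₂).abs (Eventually.of_forall fun n => hle n (ω n))
  rcases Set.mem_symmDiff.1 hω with ⟨h₁, h₂⟩ | ⟨h₂, h₁⟩ <;>
    simp [Set.indicator_of_mem, Set.indicator_of_notMem, *] at hlim <;> linarith

lemma isProbabilityMeasure_nStep (hP : ∀ x, IsPathLaw K x (P x)) (n : ℕ) (x : G) :
    IsProbabilityMeasure (nStep K n x) :=
  map_eval_eq_nStep hP n x ▸ Measure.isProbabilityMeasure_map (measurable_pi_apply n).aemeasurable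

lemma measure_symmDiff_preimage_shift_eq_zero (hP : ∀ x, IsPathLaw K x (P x)) {l : ℕ}
    {ε : ℝ≥0∞} (hε : 0 < ε) (hstar : ∀ x, ε ≤ meetMass (nStep K l x) (nStep K (l + 1) x))
    {A : Set (ℕ → G)} (hA : IsTailPathProperty A) (x : G) :
    P x (symmDiff A (shift ⁻¹' A)) = 0 := by
  choose B hB hAB using hA.exists_preimage_shift_iterate_eq
  have hBl : ∀ n, B n = shift^[l] ⁻¹' B (l + n) := fun n =>
    (shift_surjective.iterate n).preimage_injective <| by
      rw [hAB, ← Set.preimage_comp, ← Function.iterate_add, hAB]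
  have hAB' : ∀ n, shift^[n] ⁻¹' (shift ⁻¹' B n) = shift ⁻¹' A := fun n => by
    rw [← Set.preimage_comp, ← (Function.Commute.iterate_self shift n).comp_eq, Set.preimage_comp,
      hAB]
  have hδ : (1 - ε).toReal < 1 :=
    toReal_lt_of_lt_ofReal (by simpa using ENNReal.sub_lt_self one_ne_top one_ne_zero hε.ne')
  refine measure_symmDiff_eq_zero_of_abs_sub_le hP x hB
    (fun n => (hB n).preimage measurable_shift) hAB hAB' hδ fun n z => ?_
  have := isProbabilityMeasure_nStep hP
  have hC := hB (l + n)
  rw [hBl n, ← Set.preimage_comp, ← Function.iterate_succ,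
    measure_preimage_shift_iterate hP z l hC, measure_preimage_shift_iterate hP z (l + 1) hC]
  exact (abs_toReal_lintegral_sub_le _ _ fun _ => prob_le_one).trans
    (toReal_mono (tsub_le_self.trans_lt one_lt_top).ne (tsub_le_tsub_left (hstar z) 1))

lemma quasiMeasurePreserving_shift (hP : ∀ x, IsPathLaw K x (P x)) :
    Measure.QuasiMeasurePreserving shift (Measure.sum P) (Measure.sum P) := by
  refine ⟨measurable_shift, .mk fun s hs hnull => ?_⟩
  rw [Measure.map_apply measurable_shift hs, Measure.sum_apply_eq_zero]
  rw [Measure.sum_apply_eq_zero] at hnull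
  intro x
  simp [measure_preimage_shift hP x hs, hnull]

lemma exists_invariant_ae_eq (hP : ∀ x, IsPathLaw K x (P x)) {A : Set (ℕ → G)}
    (hA : MeasurableSet A) (hnull : ∀ x, P x (symmDiff A (shift ⁻¹' A)) = 0) :
    ∃ A', IsInvariantPathProperty A' ∧ ∀ x, P x (symmDiff A A') = 0 := by
  have hinv : shift ⁻¹' A =ᵐ[Measure.sum P] A := by
    rw [← measure_symmDiff_eq_zero_iff, symmDiff_comm, Measure.sum_apply_eq_zero]
    exact hnull
  obtain ⟨A', hA'm, hA'A, hA'⟩ :=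
    (quasiMeasurePreserving_shift hP).exists_preimage_eq_of_preimage_ae hA.nullMeasurableSet hinv
  refine ⟨A', ⟨hA'm, hA'⟩, ?_⟩
  rw [← Measure.sum_apply_eq_zero, measure_symmDiff_eq_zero_iff]
  exact hA'A.symm

lemma measure_eq_zero_or_one_of_liouville (hP : ∀ x, IsPathLaw K x (P x))
    (hL : LiouvilleProperty K) {A : Set (ℕ → G)} (hA : IsInvariantPathProperty A) (x : G) :
    P x A = 0 ∨ P x A = 1 := by
  have hK : ∀ z, IsProbabilityMeasure (K z) := fun z =>
    map_eval_one hP z ▸ Measure.isProbabilityMeasure_map (measurable_pi_apply 1).aemeasurable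
  have hharm : IsKHarmonic K fun z => (P z A).toReal := fun z => by
    have hz := measure_preimage_shift hP z hA.1
    rw [hA.2] at hz
    dsimp only
    rw [hz, lintegral_countable',
      ENNReal.tsum_toReal_eq fun y => mul_ne_top (measure_ne_top _ _) (measure_ne_top _ _)]
    exact tsum_congr fun y => by rw [toReal_mul, mul_comm]
  have hconst := hL _ ⟨1, fun z => by simp [abs_of_nonneg, toReal_le_of_le_ofReal, prob_le_one]⟩
    hharm
  have hAn : ∀ n, shift^[n] ⁻¹' A = A := fun n => by
    rw [Set.preimage_iterate_eq]
    exact Function.iterate_fixed hA.2 n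
  have hae : ∀ᵐ ω ∂P x, A.indicator 1 ω = (P x A).toReal := by
    filter_upwards [ae_tendsto_measure_of_preimage_shift_iterate_eq hP x (fun _ => hA.1) hAn]
      with ω hω
    simp only [hconst _ x] at hω
    exact tendsto_nhds_unique hω tendsto_const_nhds
  by_cases h1 : (P x A).toReal = 1
  · right
    rw [← prob_compl_eq_zero_iff hA.1, measure_eq_zero_iff_ae_notMem]
    filter_upwards [hae] with ω hω hωA
    simp [Set.indicator_of_notMem hωA, h1] at hω
  · left
    rw [measure_eq_zero_iff_ae_notMem]
    filter_upwards [hae] with ω hω hωA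
    simp [Set.indicator_of_mem hωA] at hω
    exact h1 hω.symm

end PathLaws

theorem steady_of_condition_star_general
    [Countable G] [MeasurableSpace G] [MeasurableSingletonClass G]
    (K : G → Measure G)
    (hstar : ∃ (l : ℕ) (ε : ℝ≥0∞), 0 < ε ∧
      ∀ x : G, ε < meetMass (nStep K l x) (nStep K (l + 1) x))
    (P : G → Measure (ℕ → G)) [∀ x, IsProbabilityMeasure (P x)]
    (hP : ∀ x, IsPathLaw K x (P x)) :
    (∀ A : Set (ℕ → G), IsTailPathProperty A →
      ∃ A' : Set (ℕ → G), IsInvariantPathProperty A' ∧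
        ∀ x : G, P x (symmDiff A A') = 0) ∧
    (∀ μ₀ : Measure G, IsProbabilityMeasure μ₀ →
      ∀ A : Set (ℕ → G), IsTailPathProperty A →
        ∃ A' : Set (ℕ → G), IsInvariantPathProperty A' ∧
          (Measure.sum fun x : G => μ₀ {x} • P x) (symmDiff A A') = 0) ∧
    (LiouvilleProperty K →
      ∀ A : Set (ℕ → G), IsTailPathProperty A → ∀ x : G, P x A = 0 ∨ P x A = 1) := by
  obtain ⟨l, ε, hε, hstar⟩ := hstar
  have hsteady : ∀ A : Set (ℕ → G), IsTailPathProperty A →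
      ∃ A', IsInvariantPathProperty A' ∧ ∀ x, P x (symmDiff A A') = 0 := fun A hA =>
    exists_invariant_ae_eq hP hA.measurableSet
      (measure_symmDiff_preimage_shift_eq_zero hP hε (fun x => (hstar x).le) hA)
  refine ⟨hsteady, fun μ₀ _ A hA => ?_, fun hL A hA x => ?_⟩
  · obtain ⟨A', hA', hnull⟩ := hsteady A hA
    exact ⟨A', hA', Measure.sum_apply_eq_zero.2 fun x => by simp [hnull x]⟩
  · obtain ⟨A', hA', hnull⟩ := hsteady A hA
    rw [measure_congr (measure_symmDiff_eq_zero_iff.1 (hnull x))]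
    exact measure_eq_zero_or_one_of_liouville hP hL hA' x

/-- Under condition (*), every tail path property agrees, up to a null set
simultaneously for all starting points, with an invariant path property; consequently the
chain with any initial distribution is steady, and under the Liouville property every tail
path property is trivial. -/
theorem steady_of_condition_star
    [Countable G] [MeasurableSpace G] [MeasurableSingletonClass G]
    (K : G → Measure G) (hK : ∀ x, IsProbabilityMeasure (K x))
    (hstar : ∃ (l : ℕ) (ε : ℝ≥0∞), 0 < ε ∧
      ∀ x : G, ε < meetMass (nStep K l x) (nStep K (l + 1) x))
    (P : G → Measure (ℕ → G)) [∀ x, IsProbabilityMeasure (P x)]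
    (hP : ∀ x, IsPathLaw K x (P x)) :
    (∀ A : Set (ℕ → G), IsTailPathProperty A →
      ∃ A' : Set (ℕ → G), IsInvariantPathProperty A' ∧
        ∀ x : G, P x (symmDiff A A') = 0) ∧
    (∀ μ₀ : Measure G, IsProbabilityMeasure μ₀ →
      ∀ A : Set (ℕ → G), IsTailPathProperty A →
        ∃ A' : Set (ℕ → G), IsInvariantPathProperty A' ∧
          (Measure.sum fun x : G => μ₀ {x} • P x) (symmDiff A A') = 0) ∧
    (LiouvilleProperty K →
      ∀ A : Set (ℕ → G), IsTailPathProperty A → ∀ x : G, P x A = 0 ∨ P x A = 1) :=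
  steady_of_condition_star_general K hstar P hP

end CMTPaper
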